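/- For every integer k ≥ 1 and every i ≥ 1, the square [y, x, …(i copies of x)…, x]^2 of the left-normed commutator lies in [H_k, H_k] ∩ γ_(2i+1)(G_k); moreover [y, x, …(i copies of x)…, x]^2 is congruent to [y, x, …(2i−1 copies of x)…, x, y] modulo γ_(2i+2)(G_k). -/

import Mathlib

/-!
Write `c i = [y, x, …, x]` (`i` copies of `x`) and `W` for the central elements of order at
most 2. First, `[H_k, H_k] ≤ W`: `H_k` is generated by the `y_j`, each `[y_a, y_b]` is an
`x`-conjugate of some `[y_0, y_m]`, and as `x^(2^k)` is central `m` may be reduced mod `2^k` to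
`|m| ≤ 2^(k-1)`, where the defining relations apply. Then `a² b = b a²` gives
`[a, b]² = [[a, b], a]⁻¹`, so inductively from `y²` central,
`c i ² = [c i, c (i-1)] ∈ [H_k, H_k] ∩ γ_(2i+1)`.

On `H_k` the commutator is bimultiplicative with values in `W`, and conjugation by `x` sends
`c i` to `c i * c (i+1)`; comparing `[c a, c b]` with its conjugate gives
`[c (a+1), c b] = [c (a+1), c (b+1)] [c a, c (b+1)]`, whose first factor lies in `γ_(a+b+4)`.
Iterating moves all `x`'s into the left entry: `[c i, c (i-1)] ≡ [c (2i-1), y]` modulo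
`γ_(2i+2)`.
-/

open Subgroup

namespace P2G

/-- The commutator `[a,b] = a⁻¹ b⁻¹ a b` (left-normed convention of the paper). -/
def comm {M : Type*} [Group M] (a b : M) : M := a⁻¹ * b⁻¹ * a * b

def X : FreeGroup (Fin 2) := FreeGroup.of 0
def Y : FreeGroup (Fin 2) := FreeGroup.of 1

/-- `y_j = x^(-j) y x^j` in the free group. -/
def yF (j : ℤ) : FreeGroup (Fin 2) := X ^ (-j) * Y * X ^ j

/-- Relations for `G_k`:
`x^(2^(k+1)) = y^4 = [x^(2^k), y] = [y^2, x] = 1` and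
`[y_0,y_i]^2 = [y_0,y_i,x] = [y_0,y_i,y] = 1` for `1 ≤ i ≤ 2^(k-1)`. -/
def rels (k : ℕ) : Set (FreeGroup (Fin 2)) :=
  {X ^ 2 ^ (k + 1), Y ^ 4, comm (X ^ 2 ^ k) Y, comm (Y ^ 2) X} ∪
    ⋃ i ∈ Set.Icc 1 (2 ^ (k - 1)),
      {comm (yF 0) (yF i) ^ 2, comm (comm (yF 0) (yF i)) X, comm (comm (yF 0) (yF i)) Y}

/-- The group `G_k`, given by the above presentation. -/
abbrev G (k : ℕ) := PresentedGroup (rels k)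

/-- The generator `x` of `G_k`. -/
def x (k : ℕ) : G k := PresentedGroup.of 0

/-- The generator `y` of `G_k`. -/
def y (k : ℕ) : G k := PresentedGroup.of 1

/-- `y_j = x^(-j) y x^j` in `G_k`. -/
def yg (k : ℕ) (j : ℤ) : G k := x k ^ (-j) * y k * x k ^ j

/-- `H_k`, the normal closure of `y` in `G_k`. -/
def Hsub (k : ℕ) : Subgroup (G k) := Subgroup.normalClosure {y k}

/-- `Z_k`, the normal closure in `G_k` of `{x^(2^k), y^2} ∪ {[y_0,y_i] : 1 ≤ i ≤ 2^(k-1)}`. -/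
def Zsub (k : ℕ) : Subgroup (G k) :=
  Subgroup.normalClosure ({x k ^ 2 ^ k, y k ^ 2} ∪
    {g | ∃ i : ℕ, 1 ≤ i ∧ i ≤ 2 ^ (k - 1) ∧ g = comm (yg k 0) (yg k i)})

/-- `G_k^(2^j)`, the subgroup generated by all `2^j`-th powers of elements of `G_k`. -/
def pow2 (k j : ℕ) : Subgroup (G k) := Subgroup.closure (Set.range fun g : G k => g ^ 2 ^ j)

/-- `w = y_(2^k − 1) y_(2^k − 2) ⋯ y_1 y_0` in `G_k`. -/
def w (k : ℕ) : G k := (((List.range (2 ^ k)).reverse).map fun j => yg k j).prod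

/-- The left-normed commutator `c k i = [y, x, …(i copies of x)…, x]`; `c k 0 = y`. -/
def c (k : ℕ) : ℕ → G k
  | 0 => y k
  | i + 1 => comm (c k i) (x k)

/-- `γ_m(G_k)`, the `m`-th term of the lower central series (`γ_1 = G_k`). -/
abbrev gamma (k m : ℕ) : Subgroup (G k) := (⊤ : Subgroup (G k)).lowerCentralSeries (m - 1)

open scoped commutatorElement

section Commutators

variable {M : Type*} [Group M]

lemma comm_eq_commutatorElement (a b : M) : comm a b = ⁅a⁻¹, b⁻¹⁆ := by
  simp [comm, commutatorElement_def]

lemma comm_eq_one_iff {a b : M} : comm a b = 1 ↔ Commute a b := by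
  rw [comm_eq_commutatorElement, commutatorElement_eq_one_iff_commute]
  exact ⟨fun h => by simpa using h.inv_inv, Commute.inv_inv⟩

lemma map_comm {N : Type*} [Group N] (f : M →* N) (a b : M) :
    f (comm a b) = comm (f a) (f b) := by
  simp [comm]

lemma comm_self (a : M) : comm a a = 1 := by
  simp [comm]

lemma comm_inv (a b : M) : (comm a b)⁻¹ = comm b a := by
  simp only [comm]; group

lemma conj_comm (g a b : M) : g⁻¹ * comm a b * g = comm (g⁻¹ * a * g) (g⁻¹ * b * g) := by
  simp only [comm]; group

lemma comm_mem_of_mem_left {N : Subgroup M} [hN : N.Normal] {a : M} (ha : a ∈ N) (b : M) :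
    comm a b ∈ N := by
  have h : comm a b = a⁻¹ * (b⁻¹ * a * b⁻¹⁻¹) := by simp only [comm]; group
  rw [h]
  exact mul_mem (inv_mem ha) (hN.conj_mem a ha b⁻¹)

lemma commutatorElement_mem_of_comm_mem {N : Subgroup M} [hN : N.Normal] {a b : M}
    (h : comm a b ∈ N) : ⁅a, b⁆ ∈ N := by
  have e : ⁅a, b⁆ = b * a * comm a b * (b * a)⁻¹ := by
    simp only [comm, commutatorElement_def]; group
  rw [e]
  exact hN.conj_mem _ h _

lemma comm_sq_of_commute_sq {a b : M} (h : Commute (a ^ 2) b) :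
    comm a b ^ 2 = (comm (comm a b) a)⁻¹ := by
  have hcac : comm a b * a * comm a b = a := by
    have e : comm a b * a * comm a b = a⁻¹ * b⁻¹ * (a ^ 2 * b) := by simp only [comm, sq]; group
    rw [e, h.eq]; group
  calc comm a b ^ 2 = comm a b * comm a b := sq _
    _ = a⁻¹ * (comm a b)⁻¹ * (comm a b * a * comm a b) * comm a b := by group
    _ = (comm (comm a b) a)⁻¹ := by rw [hcac]; simp only [comm]; group

lemma comm_mul_left_of_mem_center {a b c : M} (h : comm a c ∈ center M) :
    comm (a * b) c = comm a c * comm b c := by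
  have e : comm (a * b) c = b⁻¹ * comm a c * b * comm b c := by simp only [comm]; group
  rw [e, mul_assoc b⁻¹, ← mem_center_iff.1 h b, inv_mul_cancel_left]

lemma comm_mul_right_of_mem_center {a b c : M} (h : comm a b ∈ center M) :
    comm a (b * c) = comm a c * comm a b := by
  have e : comm a (b * c) = comm a c * (c⁻¹ * comm a b * c) := by simp only [comm]; group
  rw [e, mul_assoc c⁻¹, ← mem_center_iff.1 h c, inv_mul_cancel_left]

def centerTwoTorsion (M : Type*) [Group M] : Subgroup M where
  carrier := {z | z ∈ center M ∧ z ^ 2 = 1}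
  one_mem' := ⟨one_mem _, one_pow 2⟩
  mul_mem' := fun ⟨ha, ha2⟩ ⟨hb, hb2⟩ =>
    ⟨mul_mem ha hb, by rw [Commute.mul_pow (mem_center_iff.1 hb _), ha2, hb2, one_mul]⟩
  inv_mem' := fun ⟨ha, ha2⟩ => ⟨inv_mem ha, by rw [inv_pow, ha2, inv_one]⟩

lemma centerTwoTorsion_le_center : centerTwoTorsion M ≤ center M := fun _ h => h.1

instance : (centerTwoTorsion M).Normal :=
  ⟨fun _ hn g => by rwa [mem_center_iff.1 hn.1 g, mul_inv_cancel_right]⟩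

lemma inv_eq_self_of_mem_centerTwoTorsion {z : M} (h : z ∈ centerTwoTorsion M) : z⁻¹ = z :=
  inv_eq_of_mul_eq_one_right (by rw [← sq]; exact h.2)

lemma commutator_closure_le {S : Set M} {N : Subgroup M} [N.Normal]
    (h : ∀ s ∈ S, ∀ t ∈ S, ⁅s, t⁆ ∈ N) : ⁅closure S, closure S⁆ ≤ N := by
  rw [← QuotientGroup.ker_mk' N, ← Subgroup.map_eq_bot_iff, map_commutator, MonoidHom.map_closure,
    commutator_eq_bot_iff_le_centralizer, centralizer_closure, closure_le]
  rintro _ ⟨s, hs, rfl⟩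
  rw [SetLike.mem_coe, mem_centralizer_iff]
  rintro _ ⟨t, ht, rfl⟩
  rw [← commutatorElement_eq_one_iff_mul_comm, ← map_commutatorElement]
  exact (QuotientGroup.eq_one_iff _).2 (h t ht s hs)

lemma commutator_commutator_le_of_rotate {H₁ H₂ H₃ N : Subgroup M} [N.Normal]
    (h₁ : ⁅⁅H₂, H₃⁆, H₁⁆ ≤ N) (h₂ : ⁅⁅H₃, H₁⁆, H₂⁆ ≤ N) : ⁅⁅H₁, H₂⁆, H₃⁆ ≤ N := by
  simp only [← QuotientGroup.ker_mk' N, ← Subgroup.map_eq_bot_iff, map_commutator] at h₁ h₂ ⊢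
  exact commutator_commutator_eq_bot_of_rotate h₁ h₂

lemma commutator_lowerCentralSeries_le (a b : ℕ) :
    ⁅(⊤ : Subgroup M).lowerCentralSeries a, (⊤ : Subgroup M).lowerCentralSeries b⁆ ≤
      (⊤ : Subgroup M).lowerCentralSeries (a + b + 1) := by
  induction b generalizing a with
  | zero => exact le_rfl
  | succ b ih =>
    rw [Subgroup.lowerCentralSeries_succ, commutator_comm]
    refine commutator_commutator_le_of_rotate ?_ ?_
    · rw [commutator_comm ⊤]
      have h := ih (a + 1)
      rw [Nat.add_right_comm a 1 b, add_assoc a b 1] at h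
      exact h
    · exact commutator_mono (ih a) le_rfl

end Commutators

section Presentation

variable {k : ℕ}

lemma mk_X : PresentedGroup.mk (rels k) X = x k := rfl

lemma mk_Y : PresentedGroup.mk (rels k) Y = y k := rfl

lemma mk_yF (j : ℤ) : PresentedGroup.mk (rels k) (yF j) = yg k j := by
  simp [yF, yg, mk_X, mk_Y]

lemma x_pow_two_pow_succ : x k ^ 2 ^ (k + 1) = 1 := by
  have h := PresentedGroup.one_of_mem (rels := rels k) (x := X ^ 2 ^ (k + 1)) (by simp [rels])
  rwa [map_pow, mk_X] at h

lemma y_pow_four : y k ^ 4 = 1 := by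
  have h := PresentedGroup.one_of_mem (rels := rels k) (x := Y ^ 4) (by simp [rels])
  rwa [map_pow, mk_Y] at h

lemma comm_x_pow_two_pow_y : comm (x k ^ 2 ^ k) (y k) = 1 := by
  have h := PresentedGroup.one_of_mem (rels := rels k) (x := comm (X ^ 2 ^ k) Y) (by simp [rels])
  rwa [map_comm, map_pow, mk_X, mk_Y] at h

lemma comm_y_sq_x : comm (y k ^ 2) (x k) = 1 := by
  have h := PresentedGroup.one_of_mem (rels := rels k) (x := comm (Y ^ 2) X) (by simp [rels])
  rwa [map_comm, map_pow, mk_X, mk_Y] at h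

lemma comm_yg_zero_yg_relations {i : ℕ} (h₁ : 1 ≤ i) (h₂ : i ≤ 2 ^ (k - 1)) :
    comm (yg k 0) (yg k i) ^ 2 = 1 ∧ comm (comm (yg k 0) (yg k i)) (x k) = 1 ∧
      comm (comm (yg k 0) (yg k i)) (y k) = 1 := by
  have hrel : ∀ r ∈ ({comm (yF 0) (yF i) ^ 2, comm (comm (yF 0) (yF i)) X,
      comm (comm (yF 0) (yF i)) Y} : Set (FreeGroup (Fin 2))),
      PresentedGroup.mk (rels k) r = 1 := fun r hr =>
    PresentedGroup.one_of_mem (Set.mem_union_right _ (Set.mem_biUnion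
      (x := (i : ℤ)) ⟨by exact_mod_cast h₁, by exact_mod_cast h₂⟩ hr))
  simp only [Set.mem_insert_iff, Set.mem_singleton_iff, forall_eq_or_imp, forall_eq, map_pow,
    map_comm, mk_yF, mk_X, mk_Y] at hrel
  exact_mod_cast hrel

lemma closure_x_y : closure {x k, y k} = ⊤ := by
  rw [← PresentedGroup.closure_range_of (rels k)]
  congr
  ext g
  simp [Fin.exists_fin_two, x, y, eq_comm]

lemma mem_center_of_commute_x_y {z : G k} (hx : Commute z (x k)) (hy : Commute z (y k)) :
    z ∈ center (G k) := by
  rw [center_eq_iInf closure_x_y]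
  simp only [Set.mem_insert_iff, Set.mem_singleton_iff, mem_iInf, mem_centralizer_singleton_iff]
  rintro g (rfl | rfl)
  exacts [hx.eq, hy.eq]

lemma x_pow_two_pow_mem : x k ^ 2 ^ k ∈ centerTwoTorsion (G k) :=
  ⟨mem_center_of_commute_x_y ((Commute.refl _).pow_left _) (comm_eq_one_iff.1 comm_x_pow_two_pow_y),
    by rw [← pow_mul, ← pow_succ, x_pow_two_pow_succ]⟩

lemma y_sq_mem : y k ^ 2 ∈ centerTwoTorsion (G k) :=
  ⟨mem_center_of_commute_x_y (comm_eq_one_iff.1 comm_y_sq_x) ((Commute.refl _).pow_left _),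
    by rw [← pow_mul, y_pow_four]⟩

lemma comm_yg_zero_yg_natCast_mem {n : ℕ} (hn : n ≤ 2 ^ (k - 1)) :
    comm (yg k 0) (yg k n) ∈ centerTwoTorsion (G k) := by
  rcases Nat.eq_zero_or_pos n with rfl | hpos
  · rw [Nat.cast_zero, comm_self]; exact one_mem _
  obtain ⟨hsq, hx, hy⟩ := comm_yg_zero_yg_relations hpos hn
  exact ⟨mem_center_of_commute_x_y (comm_eq_one_iff.1 hx) (comm_eq_one_iff.1 hy), hsq⟩

end Presentation

section Conjugates

variable {k : ℕ}

lemma yg_zero : yg k 0 = y k := by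
  simp [yg]

lemma conj_x_zpow_yg (a j : ℤ) : x k ^ (-a) * yg k j * x k ^ a = yg k (j + a) := by
  simp only [yg]; group

lemma yg_congr {a b : ℤ} (h : a ≡ b [ZMOD 2 ^ k]) : yg k a = yg k b := by
  obtain ⟨q, hq⟩ := h.dvd
  have hcent : x k ^ ((2 : ℤ) ^ k * q) ∈ center (G k) := by
    rw [zpow_mul]
    exact zpow_mem (by exact_mod_cast centerTwoTorsion_le_center x_pow_two_pow_mem) q
  rw [show b = a + 2 ^ k * q by linarith, ← conj_x_zpow_yg, zpow_neg, mul_assoc,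
    mem_center_iff.1 hcent, inv_mul_cancel_left]

lemma comm_yg_yg (a b : ℤ) :
    comm (yg k a) (yg k b) = x k ^ (-a) * comm (yg k 0) (yg k (b - a)) * x k ^ a := by
  rw [zpow_neg, conj_comm, ← zpow_neg, conj_x_zpow_yg, conj_x_zpow_yg, zero_add, sub_add_cancel]

lemma comm_yg_zero_yg_neg_mem {m : ℤ} (h : comm (yg k 0) (yg k m) ∈ centerTwoTorsion (G k)) :
    comm (yg k 0) (yg k (-m)) ∈ centerTwoTorsion (G k) := by
  have hm : comm (yg k m) (yg k 0) ∈ centerTwoTorsion (G k) :=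
    comm_inv (yg k 0) (yg k m) ▸ inv_mem h
  rw [comm_yg_yg, zero_sub] at hm
  have e : comm (yg k 0) (yg k (-m)) =
      x k ^ m * (x k ^ (-m) * comm (yg k 0) (yg k (-m)) * x k ^ m) * (x k ^ m)⁻¹ := by group
  rw [e]
  exact Normal.conj_mem inferInstance _ hm _

lemma natAbs_bmod_two_pow_le (m : ℤ) : (m.bmod (2 ^ k)).natAbs ≤ 2 ^ (k - 1) := by
  have h₁ := Int.le_bmod (x := m) (m := 2 ^ k) (by positivity)
  have h₂ := Int.bmod_le (x := m) (m := 2 ^ k) (by positivity)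
  have h₃ : (2 : ℤ) ^ k ≤ 2 * 2 ^ (k - 1) := by
    rcases k with _ | k
    · simp
    · rw [Nat.add_sub_cancel, pow_succ, mul_comm]
  push_cast at h₁ h₂
  have h : ((m.bmod (2 ^ k)).natAbs : ℤ) ≤ 2 ^ (k - 1) := by omega
  exact_mod_cast h

lemma comm_yg_zero_yg_mem (m : ℤ) : comm (yg k 0) (yg k m) ∈ centerTwoTorsion (G k) := by
  have hm : m ≡ m.bmod (2 ^ k) [ZMOD 2 ^ k] := by exact_mod_cast Int.bmod_emod.symm
  rw [yg_congr hm]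
  have hr := comm_yg_zero_yg_natCast_mem (natAbs_bmod_two_pow_le (k := k) m)
  rcases Int.natAbs_eq (m.bmod (2 ^ k)) with h | h <;> rw [h]
  exacts [hr, comm_yg_zero_yg_neg_mem hr]

lemma comm_yg_mem (a b : ℤ) : comm (yg k a) (yg k b) ∈ centerTwoTorsion (G k) := by
  have h := comm_yg_zero_yg_mem (k := k) (b - a)
  rwa [comm_yg_yg, zpow_neg, mul_assoc, ← mem_center_iff.1 h.1, inv_mul_cancel_left]

lemma x_mem_normalizer_range_yg : x k ∈ normalizer (Set.range (yg k)) := by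
  intro g
  constructor
  · rintro ⟨j, rfl⟩
    exact ⟨j - 1, by simp only [yg]; group⟩
  · rintro ⟨j, hj⟩
    refine ⟨j + 1, ?_⟩
    rw [show g = (x k)⁻¹ * yg k j * x k by rw [hj]; group]
    simp only [yg]; group

lemma closure_range_yg_normal : (closure (Set.range (yg k))).Normal := by
  rw [← normalizer_eq_top_iff, eq_top_iff, ← closure_x_y, closure_le]
  rintro _ (rfl | rfl)
  · exact normalizer_le_normalizer_closure _ x_mem_normalizer_range_yg
  · exact le_normalizer (subset_closure ⟨0, yg_zero⟩)

lemma Hsub_le_closure_range_yg : Hsub k ≤ closure (Set.range (yg k)) :=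
  haveI := closure_range_yg_normal (k := k)
  normalClosure_le_normal (Set.singleton_subset_iff.2 (subset_closure ⟨0, yg_zero⟩))

lemma commutator_Hsub_le : ⁅Hsub k, Hsub k⁆ ≤ centerTwoTorsion (G k) :=
  (commutator_mono Hsub_le_closure_range_yg Hsub_le_closure_range_yg).trans <|
    commutator_closure_le <| by
      rintro _ ⟨a, rfl⟩ _ ⟨b, rfl⟩
      exact commutatorElement_mem_of_comm_mem (comm_yg_mem a b)

lemma comm_mem_of_mem_Hsub {u v : G k} (hu : u ∈ Hsub k) (hv : v ∈ Hsub k) :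
    comm u v ∈ centerTwoTorsion (G k) := by
  rw [comm_eq_commutatorElement]
  exact commutator_Hsub_le (commutator_mem_commutator (inv_mem hu) (inv_mem hv))

end Conjugates

section IteratedCommutators

variable {k : ℕ}

instance : (Hsub k).Normal := normalClosure_normal

lemma c_mem_Hsub : ∀ i, c k i ∈ Hsub k
  | 0 => subset_normalClosure rfl
  | i + 1 => comm_mem_of_mem_left (c_mem_Hsub i) _

lemma c_mem_lowerCentralSeries : ∀ i, c k i ∈ (⊤ : Subgroup (G k)).lowerCentralSeries i
  | 0 => mem_top _
  | i + 1 => by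
    rw [c, comm_eq_commutatorElement]
    exact commutator_mem_commutator (inv_mem (c_mem_lowerCentralSeries i)) (mem_top _)

lemma comm_c_mem_lowerCentralSeries (a b : ℕ) :
    comm (c k a) (c k b) ∈ (⊤ : Subgroup (G k)).lowerCentralSeries (a + b + 1) := by
  rw [comm_eq_commutatorElement]
  exact commutator_lowerCentralSeries_le a b <| commutator_mem_commutator
    (inv_mem (c_mem_lowerCentralSeries a)) (inv_mem (c_mem_lowerCentralSeries b))

lemma comm_mem_center_of_mem_Hsub {u v : G k} (hu : u ∈ Hsub k) (hv : v ∈ Hsub k) :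
    comm u v ∈ center (G k) :=
  centerTwoTorsion_le_center (comm_mem_of_mem_Hsub hu hv)

lemma c_succ_sq_of_mem_center {i : ℕ} (h : c k i ^ 2 ∈ center (G k)) :
    c k (i + 1) ^ 2 = comm (c k (i + 1)) (c k i) := by
  rw [c, comm_sq_of_commute_sq (mem_center_iff.1 h (x k)).symm]
  exact inv_eq_self_of_mem_centerTwoTorsion
    (comm_mem_of_mem_Hsub (c_mem_Hsub (i + 1)) (c_mem_Hsub i))

lemma c_sq_mem_center : ∀ i, c k i ^ 2 ∈ center (G k)
  | 0 => centerTwoTorsion_le_center y_sq_mem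
  | i + 1 => by
    rw [c_succ_sq_of_mem_center (c_sq_mem_center i)]
    exact comm_mem_center_of_mem_Hsub (c_mem_Hsub _) (c_mem_Hsub _)

lemma conj_x_c (i : ℕ) : (x k)⁻¹ * c k i * x k = c k i * c k (i + 1) := by
  simp only [c, comm]; group

lemma comm_c_succ_left (a b : ℕ) :
    comm (c k (a + 1)) (c k b) = comm (c k (a + 1)) (c k (b + 1)) * comm (c k a) (c k (b + 1)) := by
  set p := comm (c k a) (c k b)
  set q := comm (c k a) (c k (b + 1))
  set r := comm (c k (a + 1)) (c k b)
  set s := comm (c k (a + 1)) (c k (b + 1))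
  have hH : ∀ i, c k i ∈ Hsub k := c_mem_Hsub
  have hp : p ∈ center (G k) := comm_mem_center_of_mem_Hsub (hH a) (hH b)
  -- conjugation by `x` fixes the central element `p` and sends `c i` to `c i * c (i + 1)`
  have hconj : comm (c k a * c k (a + 1)) (c k b * c k (b + 1)) = p := by
    rw [← conj_x_c, ← conj_x_c, ← conj_comm, mul_assoc, ← mem_center_iff.1 hp, inv_mul_cancel_left]
  have hexpand : comm (c k a * c k (a + 1)) (c k b * c k (b + 1)) = p * (q * (s * r)) := by
    rw [comm_mul_left_of_mem_center (comm_mem_center_of_mem_Hsub (hH a) (mul_mem (hH b) (hH _))),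
      comm_mul_right_of_mem_center hp,
      comm_mul_right_of_mem_center (comm_mem_center_of_mem_Hsub (hH _) (hH b)),
      mem_center_iff.1 hp, mul_assoc]
  have hqsr : q * (s * r) = 1 := mul_eq_left.1 (hexpand.symm.trans hconj)
  calc r = s⁻¹ * q⁻¹ * (q * (s * r)) := by group
    _ = s * q := by
      rw [hqsr, mul_one, inv_eq_self_of_mem_centerTwoTorsion (comm_mem_of_mem_Hsub (hH _) (hH _)),
        inv_eq_self_of_mem_centerTwoTorsion (comm_mem_of_mem_Hsub (hH a) (hH _))]

lemma comm_c_add_mul_inv_mem (t a b : ℕ) :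
    comm (c k (a + t)) (c k b) * (comm (c k a) (c k (b + t)))⁻¹ ∈
      (⊤ : Subgroup (G k)).lowerCentralSeries (a + b + t + 2) := by
  induction t generalizing b with
  | zero => simp
  | succ t ih =>
    rw [← add_assoc a t 1, show b + (t + 1) = b + 1 + t by omega, comm_c_succ_left, mul_assoc]
    refine mul_mem ?_ ?_
    · convert comm_c_mem_lowerCentralSeries (k := k) (a + t + 1) (b + 1) using 2; omega
    · convert ih (b + 1) using 2; omega

end IteratedCommutators

theorem stmt6_general (k : ℕ) (i : ℕ) (hi : 1 ≤ i) :
    c k i ^ 2 ∈ ⁅Hsub k, Hsub k⁆ ⊓ gamma k (2 * i + 1) ∧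
    c k i ^ 2 * (comm (c k (2 * i - 1)) (y k))⁻¹ ∈ gamma k (2 * i + 2) := by
  obtain ⟨j, rfl⟩ : ∃ j, i = j + 1 := ⟨i - 1, by omega⟩
  have hsq : c k (j + 1) ^ 2 = comm (c k (j + 1)) (c k j) :=
    c_succ_sq_of_mem_center (c_sq_mem_center j)
  refine ⟨mem_inf.2 ⟨?_, ?_⟩, ?_⟩
  · rw [hsq, comm_eq_commutatorElement]
    exact commutator_mem_commutator (inv_mem (c_mem_Hsub _)) (inv_mem (c_mem_Hsub _))
  · rw [hsq]
    convert comm_c_mem_lowerCentralSeries (k := k) (j + 1) j using 2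
    omega
  · have h := inv_mem (comm_c_add_mul_inv_mem (k := k) j (j + 1) 0)
    rw [mul_inv_rev, inv_inv, zero_add] at h
    rw [hsq, show 2 * (j + 1) - 1 = j + 1 + j by omega]
    convert h using 2
    · omega
    · rfl

/-- For every `k ≥ 1` and `i ≥ 1`, `[y,x,…(i)…,x]^2` lies in
`[H_k,H_k] ∩ γ_(2i+1)(G_k)`, and is congruent to `[y,x,…(2i−1)…,x,y]` modulo
`γ_(2i+2)(G_k)`. -/
theorem stmt6 (k : ℕ) (hk : 1 ≤ k) (i : ℕ) (hi : 1 ≤ i) :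
    c k i ^ 2 ∈ ⁅Hsub k, Hsub k⁆ ⊓ gamma k (2 * i + 1) ∧
    c k i ^ 2 * (comm (c k (2 * i - 1)) (y k))⁻¹ ∈ gamma k (2 * i + 2) :=
  stmt6_general k i hi

end P2G
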